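/- arXiv:2202.02823 — 6 statements merged into one kernel-verified Lean document; each statement's English description precedes it below -/
import Mathlib

section
/- For every real s ≥ 0 and every real t ≥ 1, one has (e^s − 1 − s)^t ≤ e^{st} − 1 − st. -/
lemma aux_add_rpow (a b p : ℝ) (ha : 0 ≤ a) (hb : 0 ≤ b) (hp : 1 ≤ p) :
    a ^ p + b ^ p ≤ (a + b) ^ p := by
  lift a to NNReal using ha
  lift b to NNReal using hb
  have := NNReal.add_rpow_le_rpow_add a b hp
  exact_mod_cast this

theorem stmt_6 (s t : ℝ) (hs : 0 ≤ s) (ht : 1 ≤ t) :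
    (Real.exp s - 1 - s) ^ t ≤ Real.exp (s * t) - 1 - s * t := by
  have hu : 0 ≤ Real.exp s - 1 - s := by
    have := Real.add_one_le_exp s; linarith
  have h1 : Real.exp (s * t) = ((1 + s) + (Real.exp s - 1 - s)) ^ t := by
    rw [Real.exp_mul]; ring_nf
  have hsum : (1 + s) ^ t + (Real.exp s - 1 - s) ^ t
      ≤ ((1 + s) + (Real.exp s - 1 - s)) ^ t :=
    aux_add_rpow _ _ _ (by linarith) hu ht
  have hbern : 1 + t * s ≤ (1 + s) ^ t :=
    one_add_mul_self_le_rpow_one_add (by linarith) ht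
  rw [h1]; nlinarith
end

section
/- For every real s ≥ 0 and every real t ≥ 1, one has (e^s − 1 − s − s²/2)^t ≤ e^{st} − 1 − st − (st)²/2. -/
theorem stmt_7 (s t : ℝ) (hs : 0 ≤ s) (ht : 1 ≤ t) :
    (Real.exp s - 1 - s - s ^ 2 / 2) ^ t ≤
      Real.exp (s * t) - 1 - s * t - (s * t) ^ 2 / 2 := by
  set f : ℝ → ℝ := fun x => Real.exp x - 1 - x - x ^ 2 / 2 with hf
  have hfnn : ∀ x : ℝ, 0 ≤ x → 0 ≤ f x := fun x hx => by
    have := Real.quadratic_le_exp_of_nonneg hx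
    simp only [hf]; linarith
  have h1 : 0 ≤ f s := hfnn s hs
  have hle : f s ≤ Real.exp s := by
    have : 0 ≤ 1 + s + s ^ 2 / 2 := by positivity
    simp only [hf]; linarith
  have ht0 : (0:ℝ) ≤ t - 1 := by linarith
  have key : f s ^ t = f s ^ (t - 1) * f s := by
    have : t = (t - 1) + 1 := by ring
    rw [this, Real.rpow_add_of_nonneg h1 ht0 zero_le_one, Real.rpow_one]; norm_num
  rw [key]
  have step1 : f s ^ (t - 1) * f s ≤ Real.exp (s * (t - 1)) * f s := by
    apply mul_le_mul_of_nonneg_right _ h1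
    calc f s ^ (t-1) ≤ Real.exp s ^ (t-1) := Real.rpow_le_rpow h1 hle ht0
      _ = Real.exp (s * (t-1)) := (Real.exp_mul s (t-1)).symm
  refine step1.trans ?_
  have hu : 0 ≤ s * (t - 1) := mul_nonneg hs ht0
  have hq := Real.quadratic_le_exp_of_nonneg hu
  have hst : Real.exp (s * t) = Real.exp (s * (t-1)) * Real.exp s := by
    rw [← Real.exp_add]; ring_nf
  simp only [hf]
  rw [hst]
  nlinarith [mul_nonneg hu hs, sq_nonneg (s * (t-1)), sq_nonneg s,
    mul_nonneg (mul_nonneg hu hu) hs, mul_nonneg (mul_nonneg hu hs) hs,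
    mul_nonneg (mul_nonneg (mul_nonneg hu hu) hs) hs]
end

section
/- Let N ≥ 1, let O be a subgroup of the orthogonal group O(N), and let r > 0 be such that lim_{|y|→∞} m(y,r) = +∞, where m(y,r) := sup{ n ≥ 1 : there exist g₁,…,g_n ∈ O such that the balls B(g_i y, r), i = 1,…,n, are pairwise disjoint }. Let q ∈ [2, ∞), let C > 0, and let {u_n} be a sequence of measurable functions ℝ^N → ℝ such that each u_n is O-invariant (i.e., u_n(g x) = u_n(x) for every g ∈ O and almost every x ∈ ℝ^N), ‖u_n‖_q ≤ C for every n, and u_n → 0 in L²(B(0,R)) for every R > 0. Then lim_n sup_{y∈ℝ^N} ∫_{B(y,r)} u_n² dx = 0. -/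
open MeasureTheory Real Filter Topology ENNReal Metric

/-!
Far from the origin, the `k` disjoint balls `B(gᵢ y, r)` carry the same `L²` mass as `B(y, r)`
by invariance, while Hölder bounds the mass of their union by `C² (k |B_r|)^(1 - 2/q)`; hence
the mass of `B(y, r)` is at most `C² |B_r|^(1 - 2/q) k^(-2/q)`, uniformly in `n`. Near the origin,
`B(y, r)` lies in a fixed ball, on which `uₙ → 0` in `L²`.
-/

theorem lintegral_ofReal_sq_eq_eLpNorm_sq {α : Type*} [MeasurableSpace α] (μ : Measure α)
    (u : α → ℝ) : ∫⁻ x, ENNReal.ofReal (u x ^ 2) ∂μ = eLpNorm u 2 μ ^ 2 := by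
  have h := eLpNorm_nnreal_pow_eq_lintegral (f := u) (μ := μ) (p := 2) two_ne_zero
  simp only [NNReal.coe_ofNat, ENNReal.rpow_two, coe_ofNat] at h
  rw [h]
  congr 1 with x
  rw [Real.enorm_eq_ofReal_abs, ← ENNReal.ofReal_pow (abs_nonneg _), sq_abs]

theorem setLIntegral_ofReal_sq_le {α : Type*} [MeasurableSpace α] {μ : Measure α} {u : α → ℝ}
    {q : ℝ} (hq : 2 ≤ q) (hu : AEStronglyMeasurable u μ) (s : Set α) :
    ∫⁻ x in s, ENNReal.ofReal (u x ^ 2) ∂μ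
      ≤ eLpNorm u (ENNReal.ofReal q) μ ^ 2 * μ s ^ (1 - 2 / q) := by
  have h2q : (2 : ℝ≥0∞) ≤ ENNReal.ofReal q := by
    simpa using ENNReal.ofReal_le_ofReal hq
  rw [lintegral_ofReal_sq_eq_eLpNorm_sq]
  calc eLpNorm u 2 (μ.restrict s) ^ 2
      ≤ (eLpNorm u (ENNReal.ofReal q) μ * μ s ^ (1 / 2 - 1 / q)) ^ 2 := by
        refine pow_le_pow_left'
          ((eLpNorm_le_eLpNorm_mul_rpow_measure_univ h2q hu.restrict).trans ?_) 2
        rw [Measure.restrict_apply_univ, ENNReal.toReal_ofReal (by linarith), ENNReal.toReal_ofNat]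
        gcongr
        exact Measure.restrict_le_self
    _ = eLpNorm u (ENNReal.ofReal q) μ ^ 2 * μ s ^ (1 - 2 / q) := by
        rw [mul_pow, ← ENNReal.rpow_natCast (_ ^ _), ← ENNReal.rpow_mul]
        ring_nf

theorem tendsto_mul_natCast_rpow_neg {D : ℝ≥0∞} (hD : D ≠ ∞) {a : ℝ} (ha : 0 < a) :
    Tendsto (fun k : ℕ => D * (k : ℝ≥0∞) ^ (-a)) atTop (𝓝 0) := by
  have h := (ENNReal.continuous_rpow_const (y := -a)).tendsto ∞ |>.comp tendsto_nat_nhds_top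
  rw [ENNReal.top_rpow_of_neg (by linarith)] at h
  simpa using ENNReal.Tendsto.const_mul h (Or.inr hD)

section Orbit

variable {E : Type*} [NormedAddCommGroup E] [InnerProductSpace ℝ E] [FiniteDimensional ℝ E]
  [MeasurableSpace E] [BorelSpace E]

theorem setLIntegral_ball_map_eq (g : E ≃ₗᵢ[ℝ] E) {f : E → ℝ≥0∞} (hf : ∀ᵐ x, f (g x) = f x)
    (y : E) (r : ℝ) :
    ∫⁻ x in ball (g y) r, f x = ∫⁻ x in ball y r, f x := by
  have hpre : g ⁻¹' ball (g y) r = ball y r := by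
    ext x
    simp
  rw [← g.measurePreserving.setLIntegral_comp_preimage_emb
    g.toMeasurableEquiv.measurableEmbedding f _, hpre]
  exact setLIntegral_congr_fun_ae measurableSet_ball (hf.mono fun x hx _ => hx)

theorem setLIntegral_ball_le_of_pairwise_disjoint {k : ℕ} (hk : k ≠ 0)
    (g : Fin k → E ≃ₗᵢ[ℝ] E) {u : E → ℝ} (hu : AEStronglyMeasurable u)
    (hinv : ∀ i, ∀ᵐ x, u (g i x) = u x) {q : ℝ} (hq : 2 ≤ q) {y : E} {r : ℝ}
    (hdisj : Pairwise fun i j => Disjoint (ball (g i y) r) (ball (g j y) r)) :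
    ∫⁻ x in ball y r, ENNReal.ofReal (u x ^ 2)
      ≤ eLpNorm u (ENNReal.ofReal q) volume ^ 2 * volume (ball (0 : E) r) ^ (1 - 2 / q)
        * (k : ℝ≥0∞) ^ (-(2 / q)) := by
  have hexp : 0 ≤ 1 - 2 / q := sub_nonneg.2 ((div_le_one (by linarith)).2 hq)
  have hk0 : (k : ℝ≥0∞) ≠ 0 := by exact_mod_cast hk
  have hunion : (k : ℝ≥0∞) * ∫⁻ x in ball y r, ENNReal.ofReal (u x ^ 2)
      = ∫⁻ x in ⋃ i, ball (g i y) r, ENNReal.ofReal (u x ^ 2) := by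
    rw [lintegral_iUnion (fun _ => measurableSet_ball) hdisj, tsum_fintype]
    have hball : ∀ i, ∫⁻ x in ball (g i y) r, ENNReal.ofReal (u x ^ 2)
        = ∫⁻ x in ball y r, ENNReal.ofReal (u x ^ 2) := fun i =>
      setLIntegral_ball_map_eq (g i) ((hinv i).mono fun x hx => by simp only [hx]) y r
    simp [hball]
  have hvol : volume (⋃ i, ball (g i y) r) ≤ k * volume (ball (0 : E) r) := by
    refine (measure_iUnion_le _).trans ?_
    simp [Measure.addHaar_ball_center]
  refine (ENNReal.mul_le_mul_iff_right hk0 (natCast_ne_top k)).1 ?_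
  calc (k : ℝ≥0∞) * ∫⁻ x in ball y r, ENNReal.ofReal (u x ^ 2)
      = ∫⁻ x in ⋃ i, ball (g i y) r, ENNReal.ofReal (u x ^ 2) := hunion
    _ ≤ eLpNorm u (ENNReal.ofReal q) volume ^ 2 * volume (⋃ i, ball (g i y) r) ^ (1 - 2 / q) :=
        setLIntegral_ofReal_sq_le hq hu _
    _ ≤ eLpNorm u (ENNReal.ofReal q) volume ^ 2 * (k * volume (ball (0 : E) r)) ^ (1 - 2 / q) := by
        gcongr
    _ = k * (eLpNorm u (ENNReal.ofReal q) volume ^ 2 * volume (ball (0 : E) r) ^ (1 - 2 / q)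
        * (k : ℝ≥0∞) ^ (-(2 / q))) := by
        rw [ENNReal.mul_rpow_of_nonneg _ _ hexp, show 1 - 2 / q = 1 + -(2 / q) by ring,
          ENNReal.rpow_add _ _ hk0 (natCast_ne_top k), ENNReal.rpow_one]
        ring

end Orbit

theorem stmt_10_general (N : ℕ)
    (O : Subgroup (EuclideanSpace ℝ (Fin N) ≃ₗᵢ[ℝ] EuclideanSpace ℝ (Fin N)))
    (r : ℝ)
    (hcompat : ∀ n : ℕ, ∃ R : ℝ, ∀ y : EuclideanSpace ℝ (Fin N), R ≤ ‖y‖ →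
      ∃ g : Fin n → O, ∀ i j, i ≠ j →
        Disjoint (Metric.ball ((g i : EuclideanSpace ℝ (Fin N) ≃ₗᵢ[ℝ]
              EuclideanSpace ℝ (Fin N)) y) r)
          (Metric.ball ((g j : EuclideanSpace ℝ (Fin N) ≃ₗᵢ[ℝ]
              EuclideanSpace ℝ (Fin N)) y) r))
    (q C : ℝ) (hq : 2 ≤ q)
    (u : ℕ → EuclideanSpace ℝ (Fin N) → ℝ)
    (hmeas : ∀ n, Measurable (u n))
    (hinv : ∀ n, ∀ g ∈ O, ∀ᵐ x,
      u n ((g : EuclideanSpace ℝ (Fin N) ≃ₗᵢ[ℝ] EuclideanSpace ℝ (Fin N)) x) = u n x)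
    (hbound : ∀ n, eLpNorm (u n) (ENNReal.ofReal q) volume ≤ ENNReal.ofReal C)
    (hloc : ∀ R > (0 : ℝ), Filter.Tendsto
      (fun n => ∫⁻ x in Metric.ball (0 : EuclideanSpace ℝ (Fin N)) R,
        ENNReal.ofReal ((u n x) ^ 2)) Filter.atTop (nhds 0)) :
    Filter.Tendsto
      (fun n => ⨆ y : EuclideanSpace ℝ (Fin N),
        ∫⁻ x in Metric.ball y r, ENNReal.ofReal ((u n x) ^ 2))
      Filter.atTop (nhds 0) := by
  set D := ENNReal.ofReal C ^ 2 * volume (ball (0 : EuclideanSpace ℝ (Fin N)) r) ^ (1 - 2 / q)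
    with hDdef
  have hD : D ≠ ∞ := mul_ne_top (pow_ne_top ofReal_ne_top) (rpow_ne_top_of_nonneg
    (sub_nonneg.2 ((div_le_one (by linarith)).2 hq)) measure_ball_lt_top.ne)
  refine ENNReal.tendsto_nhds_zero.2 fun ε hε => ?_
  obtain ⟨k, hkε, hk⟩ := (((tendsto_mul_natCast_rpow_neg hD (a := 2 / q) (by positivity)).eventually
    (eventually_le_nhds hε)).and (eventually_ne_atTop 0)).exists
  obtain ⟨R, hR⟩ := hcompat k
  filter_upwards [ENNReal.tendsto_nhds_zero.1 (hloc (max (R + r) 1) (by positivity)) ε hε]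
    with n hn
  refine iSup_le fun y => ?_
  rcases le_or_gt R ‖y‖ with hy | hy
  · obtain ⟨g, hg⟩ := hR y hy
    refine (setLIntegral_ball_le_of_pairwise_disjoint (E := EuclideanSpace ℝ (Fin N)) hk
      (fun i => g i) (hmeas n).aestronglyMeasurable (fun i => hinv n _ (g i).2) hq hg).trans
      (le_trans ?_ hkε)
    rw [hDdef]
    gcongr
    exact hbound n
  · refine (lintegral_mono_set (ball_subset_ball' ?_)).trans hn
    rw [dist_zero_right]
    linarith [le_max_left (R + r) 1]

theorem stmt_10 (N : ℕ) (hN : 1 ≤ N)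
    (O : Subgroup (EuclideanSpace ℝ (Fin N) ≃ₗᵢ[ℝ] EuclideanSpace ℝ (Fin N)))
    (r : ℝ) (hr : 0 < r)
    (hcompat : ∀ n : ℕ, ∃ R : ℝ, ∀ y : EuclideanSpace ℝ (Fin N), R ≤ ‖y‖ →
      ∃ g : Fin n → O, ∀ i j, i ≠ j →
        Disjoint (Metric.ball ((g i : EuclideanSpace ℝ (Fin N) ≃ₗᵢ[ℝ]
              EuclideanSpace ℝ (Fin N)) y) r)
          (Metric.ball ((g j : EuclideanSpace ℝ (Fin N) ≃ₗᵢ[ℝ]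
              EuclideanSpace ℝ (Fin N)) y) r))
    (q C : ℝ) (hq : 2 ≤ q) (hC : 0 < C)
    (u : ℕ → EuclideanSpace ℝ (Fin N) → ℝ)
    (hmeas : ∀ n, Measurable (u n))
    (hinv : ∀ n, ∀ g ∈ O, ∀ᵐ x,
      u n ((g : EuclideanSpace ℝ (Fin N) ≃ₗᵢ[ℝ] EuclideanSpace ℝ (Fin N)) x) = u n x)
    (hbound : ∀ n, eLpNorm (u n) (ENNReal.ofReal q) volume ≤ ENNReal.ofReal C)
    (hloc : ∀ R > (0 : ℝ), Filter.Tendsto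
      (fun n => ∫⁻ x in Metric.ball (0 : EuclideanSpace ℝ (Fin N)) R,
        ENNReal.ofReal ((u n x) ^ 2)) Filter.atTop (nhds 0)) :
    Filter.Tendsto
      (fun n => ⨆ y : EuclideanSpace ℝ (Fin N),
        ∫⁻ x in Metric.ball y r, ENNReal.ofReal ((u n x) ^ 2))
      Filter.atTop (nhds 0) :=
  stmt_10_general N O r hcompat q C hq u hmeas hinv hbound hloc
end

section
/- Let N ≥ 5, set 2** = 2N/(N−4), and let F : ℝ → ℝ be continuously differentiable with F(0) = 0 and such that there exists C > 0 with |F'(s)| ≤ C(|s| + |s|^{2**−1}) for all s ∈ ℝ. Let u₀ ∈ L²(ℝ^N) ∩ L^{2**}(ℝ^N) and let {u_n} be a sequence of measurable functions ℝ^N → ℝ with sup_n (‖u_n‖_2 + ‖u_n‖_{2**}) < ∞ and u_n → u₀ almost everywhere in ℝ^N. Then lim_n ∫_{ℝ^N} (F(u_n) − F(u_n − u₀)) dx = ∫_{ℝ^N} F(u₀) dx. -/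
open MeasureTheory Filter ENNReal Topology

/-!
With `q = 2**` and `m = |uₙ| + |u₀|`, the mean value theorem bounds `|F(uₙ) - F(uₙ - u₀)|` by
`C (m + m^(q-1)) |u₀|`, where `m` is bounded in `L²` and `m^(q-1)` in the dual exponent of `L^q`.
By Hölder, the smallness of `u₀` on small sets and outside large sets, in `L²` and in `L^q`,
therefore makes the sequence `F(uₙ) - F(uₙ - u₀)` uniformly integrable and uniformly tight in `L¹`.
It converges a.e. to `F(u₀)` because `F 0 = 0`, so Vitali's convergence theorem gives
convergence in `L¹`, hence of the integrals.
-/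

section Uniform

variable {ι α β γ : Type*} [MeasurableSpace α] {μ : Measure α} {p q r : ℝ≥0∞}
  [NormedAddCommGroup β] [NormedAddCommGroup γ]

lemma eLpNorm_indicator_le_of_norm_le {f : α → β} {g : α → γ} (s : Set α)
    (hfg : ∀ᵐ x ∂μ, ‖f x‖ ≤ ‖g x‖) :
    eLpNorm (s.indicator f) p μ ≤ eLpNorm (s.indicator g) p μ :=
  eLpNorm_mono_ae <| hfg.mono fun x hx => by by_cases hxs : x ∈ s <;> simp [hxs, hx]

protected theorem MeasureTheory.UnifIntegrable.mono {f : ι → α → β} {g : ι → α → γ}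
    (hg : UnifIntegrable g p μ) (hfg : ∀ i, ∀ᵐ x ∂μ, ‖f i x‖ ≤ ‖g i x‖) :
    UnifIntegrable f p μ := fun _ hε =>
  let ⟨δ, hδ, h⟩ := hg hε
  ⟨δ, hδ, fun i s hs hμs => (eLpNorm_indicator_le_of_norm_le s (hfg i)).trans (h i s hs hμs)⟩

protected theorem MeasureTheory.UnifTight.mono {f : ι → α → β} {g : ι → α → γ}
    (hg : UnifTight g p μ) (hfg : ∀ i, ∀ᵐ x ∂μ, ‖f i x‖ ≤ ‖g i x‖) :
    UnifTight f p μ := fun _ hε =>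
  let ⟨s, hμs, h⟩ := hg hε
  ⟨s, hμs, fun i => (eLpNorm_indicator_le_of_norm_le sᶜ (hfg i)).trans (h i)⟩

lemma eLpNorm_indicator_mul_le [HolderTriple p q r] {g h : α → ℝ} {s : Set α}
    (hg : AEStronglyMeasurable g μ) (hh : AEStronglyMeasurable h μ) (hs : MeasurableSet s) :
    eLpNorm (s.indicator fun x => g x * h x) r μ ≤ eLpNorm g p μ * eLpNorm (s.indicator h) q μ := by
  have : (s.indicator fun x => g x * h x) = g • s.indicator h := by
    ext x; simp [Set.indicator_mul_right]
  rw [this]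
  exact eLpNorm_smul_le_mul_eLpNorm (hh.indicator hs) hg

lemma ENNReal.mul_ofReal_div_toReal_add_one_le {K : ℝ≥0∞} (hK : K ≠ ∞) {ε : ℝ} (hε : 0 ≤ ε) :
    K * ENNReal.ofReal (ε / (K.toReal + 1)) ≤ ENNReal.ofReal ε := by
  nth_rw 1 [← ENNReal.ofReal_toReal hK]
  rw [← ENNReal.ofReal_mul ENNReal.toReal_nonneg]
  gcongr
  rw [mul_div_assoc', div_le_iff₀ (by positivity)]
  nlinarith [ENNReal.toReal_nonneg (a := K)]

theorem unifIntegrable_mul [HolderTriple p q r] (hq₁ : 1 ≤ q) (hq : q ≠ ∞)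
    {g : ι → α → ℝ} {h : α → ℝ} {K : ℝ≥0∞} (hK : K ≠ ∞)
    (hg : ∀ i, AEStronglyMeasurable (g i) μ) (hgK : ∀ i, eLpNorm (g i) p μ ≤ K)
    (hh : MemLp h q μ) :
    UnifIntegrable (fun i x => g i x * h x) r μ := by
  intro ε hε
  obtain ⟨δ, hδ, hsmall⟩ := hh.eLpNorm_indicator_le hq₁ hq (ε := ε / (K.toReal + 1)) (by positivity)
  refine ⟨δ, hδ, fun i s hs hμs => ?_⟩
  calc eLpNorm (s.indicator fun x => g i x * h x) r μ
      ≤ eLpNorm (g i) p μ * eLpNorm (s.indicator h) q μ :=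
        eLpNorm_indicator_mul_le (hg i) hh.1 hs
    _ ≤ K * ENNReal.ofReal (ε / (K.toReal + 1)) :=
        mul_le_mul' (hgK i) (hsmall s hs hμs)
    _ ≤ ENNReal.ofReal ε := ENNReal.mul_ofReal_div_toReal_add_one_le hK hε.le

theorem unifTight_mul [HolderTriple p q r] (hq : q ≠ ∞)
    {g : ι → α → ℝ} {h : α → ℝ} {K : ℝ≥0∞} (hK : K ≠ ∞)
    (hg : ∀ i, AEStronglyMeasurable (g i) μ) (hgK : ∀ i, eLpNorm (g i) p μ ≤ K)
    (hh : MemLp h q μ) :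
    UnifTight (fun i x => g i x * h x) r μ := by
  rw [unifTight_iff_real]
  intro ε hε
  obtain ⟨s, hs, hμs, hsmall⟩ := hh.exists_eLpNorm_indicator_compl_lt hq
    (ε := ENNReal.ofReal (ε / (K.toReal + 1))) (by positivity)
  refine ⟨s, hμs.ne, fun i => ?_⟩
  calc eLpNorm (sᶜ.indicator fun x => g i x * h x) r μ
      ≤ eLpNorm (g i) p μ * eLpNorm (sᶜ.indicator h) q μ :=
        eLpNorm_indicator_mul_le (hg i) hh.1 hs.compl
    _ ≤ K * ENNReal.ofReal (ε / (K.toReal + 1)) := mul_le_mul' (hgK i) hsmall.le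
    _ ≤ ENNReal.ofReal ε := ENNReal.mul_ofReal_div_toReal_add_one_le hK hε.le

end Uniform
section Growth

variable {α : Type*} [MeasurableSpace α] {μ : Measure α} {F : ℝ → ℝ} {C q : ℝ}

lemma norm_sub_comp_sub_le (hq : 1 ≤ q) (hF : Differentiable ℝ F) (hC : 0 ≤ C)
    (hF' : ∀ s, |deriv F s| ≤ C * (|s| + |s| ^ (q - 1))) (a b : ℝ) :
    ‖F a - F (a - b)‖ ≤ ‖C * (|a| + |b|) * b + C * (|a| + |b|) ^ (q - 1) * b‖ := by
  set m := |a| + |b|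
  have hderiv : ∀ x ∈ Metric.closedBall (0 : ℝ) m, ‖deriv F x‖ ≤ C * m + C * m ^ (q - 1) := by
    intro x hx
    rw [mem_closedBall_zero_iff, Real.norm_eq_abs] at hx
    calc ‖deriv F x‖ ≤ C * (|x| + |x| ^ (q - 1)) := hF' x
      _ ≤ C * (m + m ^ (q - 1)) := by gcongr
      _ = C * m + C * m ^ (q - 1) := mul_add _ _ _
  have hmvt := (convex_closedBall (0 : ℝ) m).norm_image_sub_le_of_norm_deriv_le
    (fun x _ => hF x) hderiv (mem_closedBall_zero_iff.2 (norm_sub_le a b))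
    (mem_closedBall_zero_iff.2 (le_add_of_nonneg_right (abs_nonneg b)))
  calc ‖F a - F (a - b)‖ ≤ (C * m + C * m ^ (q - 1)) * |b| := by simpa using hmvt
    _ ≤ |C * m + C * m ^ (q - 1)| * |b| := by gcongr; exact le_abs_self _
    _ = ‖C * m * b + C * m ^ (q - 1) * b‖ := by rw [Real.norm_eq_abs, ← abs_mul, add_mul]

lemma eLpNorm_abs_add_abs_le {v w : α → ℝ} (hv : AEStronglyMeasurable v μ)
    (hw : AEStronglyMeasurable w μ) {p : ℝ≥0∞} (hp : 1 ≤ p) :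
    eLpNorm (fun x => |v x| + |w x|) p μ ≤ eLpNorm v p μ + eLpNorm w p μ :=
  calc eLpNorm (fun x => |v x| + |w x|) p μ = eLpNorm ((‖v ·‖) + (‖w ·‖)) p μ := rfl
    _ ≤ eLpNorm (‖v ·‖) p μ + eLpNorm (‖w ·‖) p μ := eLpNorm_add_le hv.norm hw.norm hp
    _ = eLpNorm v p μ + eLpNorm w p μ := by rw [eLpNorm_norm, eLpNorm_norm]

lemma eLpNorm_const_mul_abs_add_abs_le {v w : α → ℝ} (hv : AEStronglyMeasurable v μ)
    (hw : AEStronglyMeasurable w μ) {p : ℝ≥0∞} (hp : 1 ≤ p) :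
    eLpNorm (fun x => C * (|v x| + |w x|)) p μ ≤ ‖C‖ₑ * (eLpNorm v p μ + eLpNorm w p μ) := by
  rw [show (fun x => C * (|v x| + |w x|)) = C • fun x => |v x| + |w x| from rfl,
    eLpNorm_const_smul]
  gcongr
  exact eLpNorm_abs_add_abs_le hv hw hp

lemma eLpNorm_const_mul_abs_add_abs_rpow_le (hq : 1 < q) {v w : α → ℝ}
    (hv : AEStronglyMeasurable v μ) (hw : AEStronglyMeasurable w μ) :
    eLpNorm (fun x => C * (|v x| + |w x|) ^ (q - 1)) (ENNReal.ofReal (q / (q - 1))) μ ≤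
      ‖C‖ₑ * (eLpNorm v (ENNReal.ofReal q) μ + eLpNorm w (ENNReal.ofReal q) μ) ^ (q - 1) := by
  have hexp : ENNReal.ofReal (q / (q - 1)) * ENNReal.ofReal (q - 1) = ENNReal.ofReal q := by
    rw [← ENNReal.ofReal_mul (by positivity), div_mul_cancel₀ _ (by linarith)]
  have habs : ∀ x, ‖|v x| + |w x|‖ = |v x| + |w x| := fun x => by
    rw [Real.norm_eq_abs, abs_of_nonneg (by positivity)]
  have hrpow := eLpNorm_norm_rpow (p := ENNReal.ofReal (q / (q - 1))) (μ := μ)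
    (fun x => |v x| + |w x|) (show 0 < q - 1 by linarith)
  simp only [hexp, habs] at hrpow
  rw [show (fun x => C * (|v x| + |w x|) ^ (q - 1)) = C • fun x => (|v x| + |w x|) ^ (q - 1)
    from rfl, eLpNorm_const_smul, hrpow]
  gcongr
  exact eLpNorm_abs_add_abs_le hv hw (ENNReal.one_le_ofReal.2 hq.le)


lemma holderConjugate_ofReal_conjExponent (hq : 1 < q) :
    HolderConjugate (ENNReal.ofReal (q / (q - 1))) (ENNReal.ofReal q) :=
  (Real.HolderConjugate.conjExponent hq).symm.ennrealOfReal

lemma integrable_comp_sub_comp_sub (hq : 1 < q) (hF : Differentiable ℝ F) (hC : 0 ≤ C)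
    (hF' : ∀ s, |deriv F s| ≤ C * (|s| + |s| ^ (q - 1))) {v w : α → ℝ}
    (hv₂ : MemLp v 2 μ) (hvq : MemLp v (ENNReal.ofReal q) μ)
    (hw₂ : MemLp w 2 μ) (hwq : MemLp w (ENNReal.ofReal q) μ) :
    Integrable (fun x => F (v x) - F (v x - w x)) μ := by
  have := holderConjugate_ofReal_conjExponent hq
  have hFc := hF.continuous
  have hv := hv₂.1
  have hw := hw₂.1
  have hG₁ : MemLp (fun x => C * (|v x| + |w x|)) 2 μ := (hv₂.norm.add hw₂.norm).const_mul C
  have hG₂ : MemLp (fun x => C * (|v x| + |w x|) ^ (q - 1)) (ENNReal.ofReal (q / (q - 1))) μ :=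
    ⟨by fun_prop (disch := linarith),
      (eLpNorm_const_mul_abs_add_abs_rpow_le hq hv hw).trans_lt <| by
        have := hvq.2; have := hwq.2; finiteness⟩
  have hmaj : Integrable (fun x => C * (|v x| + |w x|) * w x
      + C * (|v x| + |w x|) ^ (q - 1) * w x) μ :=
    (memLp_one_iff_integrable.1 (hw₂.mul' hG₁)).add (memLp_one_iff_integrable.1 (hwq.mul' hG₂))
  exact hmaj.mono (by fun_prop) (ae_of_all _ fun x => norm_sub_comp_sub_le hq.le hF hC hF' _ _)

theorem unifIntegrable_and_unifTight_comp_sub_comp_sub (hq : 1 < q) (hF : Differentiable ℝ F)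
    (hC : 0 ≤ C) (hF' : ∀ s, |deriv F s| ≤ C * (|s| + |s| ^ (q - 1))) {u₀ : α → ℝ}
    (hu₀₂ : MemLp u₀ 2 μ) (hu₀q : MemLp u₀ (ENNReal.ofReal q) μ) {u : ℕ → α → ℝ}
    (hu : ∀ n, AEStronglyMeasurable (u n) μ) {K : ℝ≥0∞} (hK : K ≠ ∞)
    (hu₂ : ∀ n, eLpNorm (u n) 2 μ ≤ K) (huq : ∀ n, eLpNorm (u n) (ENNReal.ofReal q) μ ≤ K) :
    UnifIntegrable (fun n x => F (u n x) - F (u n x - u₀ x)) 1 μ ∧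
      UnifTight (fun n x => F (u n x) - F (u n x - u₀ x)) 1 μ := by
  have := holderConjugate_ofReal_conjExponent hq
  have hu₀ := hu₀₂.1
  set G₁ : ℕ → α → ℝ := fun n x => C * (|u n x| + |u₀ x|)
  set G₂ : ℕ → α → ℝ := fun n x => C * (|u n x| + |u₀ x|) ^ (q - 1)
  have hG₁ : ∀ n, AEStronglyMeasurable (G₁ n) μ := fun n => by have := hu n; fun_prop
  have hG₂ : ∀ n, AEStronglyMeasurable (G₂ n) μ := fun n => by
    have := hu n; fun_prop (disch := linarith)
  have hG₁K : ∀ n, eLpNorm (G₁ n) 2 μ ≤ ‖C‖ₑ * (K + eLpNorm u₀ 2 μ) := fun n =>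
    (eLpNorm_const_mul_abs_add_abs_le (hu n) hu₀ one_le_two).trans (by gcongr; exact hu₂ n)
  have hG₂K : ∀ n, eLpNorm (G₂ n) (ENNReal.ofReal (q / (q - 1))) μ ≤
      ‖C‖ₑ * (K + eLpNorm u₀ (ENNReal.ofReal q) μ) ^ (q - 1) := fun n =>
    (eLpNorm_const_mul_abs_add_abs_rpow_le hq (hu n) hu₀).trans (by gcongr; exact huq n)
  have hK₁ : ‖C‖ₑ * (K + eLpNorm u₀ 2 μ) ≠ ∞ := by have := hu₀₂.2; finiteness
  have hK₂ : ‖C‖ₑ * (K + eLpNorm u₀ (ENNReal.ofReal q) μ) ^ (q - 1) ≠ ∞ := by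
    have := hu₀q.2; finiteness
  have hmaj : ∀ n, ∀ᵐ x ∂μ, ‖F (u n x) - F (u n x - u₀ x)‖ ≤
      ‖((fun n x => G₁ n x * u₀ x) + fun n x => G₂ n x * u₀ x) n x‖ := fun n =>
    ae_of_all _ fun x => norm_sub_comp_sub_le hq.le hF hC hF' _ _
  have hprod₁ : ∀ n, AEStronglyMeasurable (fun x => G₁ n x * u₀ x) μ := fun n => (hG₁ n).mul hu₀
  have hprod₂ : ∀ n, AEStronglyMeasurable (fun x => G₂ n x * u₀ x) μ := fun n => (hG₂ n).mul hu₀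
  have hq₁ : 1 ≤ ENNReal.ofReal q := ENNReal.one_le_ofReal.2 hq.le
  exact ⟨((unifIntegrable_mul one_le_two ofNat_ne_top hK₁ hG₁ hG₁K hu₀₂).add
      (unifIntegrable_mul hq₁ ofReal_ne_top hK₂ hG₂ hG₂K hu₀q) le_rfl hprod₁ hprod₂).mono hmaj,
    ((unifTight_mul ofNat_ne_top hK₁ hG₁ hG₁K hu₀₂).add
      (unifTight_mul ofReal_ne_top hK₂ hG₂ hG₂K hu₀q) hprod₁ hprod₂).mono hmaj⟩

theorem tendsto_integral_comp_sub_comp_sub (hq : 1 < q) (hF : Differentiable ℝ F) (hF0 : F 0 = 0)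
    (hC : 0 ≤ C) (hF' : ∀ s, |deriv F s| ≤ C * (|s| + |s| ^ (q - 1))) {u₀ : α → ℝ}
    (hu₀₂ : MemLp u₀ 2 μ) (hu₀q : MemLp u₀ (ENNReal.ofReal q) μ) {u : ℕ → α → ℝ}
    (hu : ∀ n, AEStronglyMeasurable (u n) μ) {K : ℝ≥0∞} (hK : K ≠ ∞)
    (hu₂ : ∀ n, eLpNorm (u n) 2 μ ≤ K) (huq : ∀ n, eLpNorm (u n) (ENNReal.ofReal q) μ ≤ K)
    (hae : ∀ᵐ x ∂μ, Tendsto (fun n => u n x) atTop (𝓝 (u₀ x))) :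
    Tendsto (fun n => ∫ x, F (u n x) - F (u n x - u₀ x) ∂μ) atTop (𝓝 (∫ x, F (u₀ x) ∂μ)) := by
  have hint : ∀ n, Integrable (fun x => F (u n x) - F (u n x - u₀ x)) μ := fun n =>
    integrable_comp_sub_comp_sub hq hF hC hF' ⟨hu n, (hu₂ n).trans_lt hK.lt_top⟩
      ⟨hu n, (huq n).trans_lt hK.lt_top⟩ hu₀₂ hu₀q
  have hint₀ : Integrable (fun x => F (u₀ x)) μ := by
    simpa [hF0] using integrable_comp_sub_comp_sub hq hF hC hF' hu₀₂ hu₀q hu₀₂ hu₀q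
  have hlim : ∀ᵐ x ∂μ, Tendsto (fun n => F (u n x) - F (u n x - u₀ x)) atTop (𝓝 (F (u₀ x))) := by
    filter_upwards [hae] with x hx
    simpa [hF0] using ((hF.continuous.tendsto _).comp hx).sub
      ((hF.continuous.tendsto _).comp (hx.sub_const (u₀ x)))
  obtain ⟨hui, hut⟩ :=
    unifIntegrable_and_unifTight_comp_sub_comp_sub hq hF hC hF' hu₀₂ hu₀q hu hK hu₂ huq
  exact tendsto_integral_of_L1' _ hint₀.1 (.of_forall hint) <|
    tendsto_Lp_of_tendsto_ae le_rfl one_ne_top (fun n => (hint n).1)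
      (memLp_one_iff_integrable.2 hint₀) hui hut hlim

end Growth

theorem stmt_12 (N : ℕ) (hN : 5 ≤ N)
    (F : ℝ → ℝ) (hF : ContDiff ℝ 1 F) (hF0 : F 0 = 0)
    (C : ℝ) (hC : 0 < C)
    (hF' : ∀ s : ℝ, |deriv F s| ≤ C * (|s| + |s| ^ (2 * N / ((N : ℝ) - 4) - 1)))
    (u₀ : EuclideanSpace ℝ (Fin N) → ℝ)
    (hu₀ : MemLp u₀ 2 volume ∧
      MemLp u₀ (ENNReal.ofReal (2 * N / ((N : ℝ) - 4))) volume)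
    (u : ℕ → EuclideanSpace ℝ (Fin N) → ℝ)
    (hmeas : ∀ n, Measurable (u n))
    (hb : ⨆ n, (eLpNorm (u n) 2 volume
      + eLpNorm (u n) (ENNReal.ofReal (2 * N / ((N : ℝ) - 4))) volume) < ⊤)
    (hae : ∀ᵐ x, Tendsto (fun n => u n x) atTop (nhds (u₀ x))) :
    Tendsto (fun n => ∫ x, (F (u n x) - F (u n x - u₀ x))) atTop
      (nhds (∫ x, F (u₀ x))) := by
  have hN' : (5 : ℝ) ≤ N := by exact_mod_cast hN
  have hq : 1 < 2 * N / ((N : ℝ) - 4) := by rw [lt_div_iff₀ (by linarith)]; linarith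
  exact tendsto_integral_comp_sub_comp_sub hq (hF.differentiable one_ne_zero) hF0 hC.le hF'
    hu₀.1 hu₀.2 (fun n => (hmeas n).aestronglyMeasurable) hb.ne
    (fun n => le_iSup_of_le n le_self_add)
    (fun n => le_iSup_of_le n le_add_self) hae
end

section
/- Let g : ℝ → ℝ be continuous and odd, let m > 0 satisfy limsup_{s→0} g(s)/s = −m, and fix m' ∈ (0, m) and q > 2. Then there exists δ₀ > 0 such that h(s) = h̄(s) = H(s) = H̄(s) = 0 for every s ∈ [−δ₀, δ₀]. -/
open MeasureTheory Real Filter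

/-- `h(s) = (m's + g(s))₊` for `s ≥ 0`, extended as an odd function for `s < 0`. -/
noncomputable def hfun (g : ℝ → ℝ) (m' : ℝ) (s : ℝ) : ℝ :=
  if 0 ≤ s then max (m' * s + g s) 0 else -max (m' * (-s) + g (-s)) 0

/-- `h̄(s) = s^{q-1} sup_{0<t≤s} h(t)/t^{q-1}` for `s > 0`, `h̄(0)=0`,
extended as an odd function for `s < 0`. -/
noncomputable def hbar (g : ℝ → ℝ) (m' q : ℝ) (s : ℝ) : ℝ :=
  if 0 < s then s ^ (q - 1) * sSup ((fun t => hfun g m' t / t ^ (q - 1)) '' Set.Ioc 0 s)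
  else if s < 0 then
    -((-s) ^ (q - 1) * sSup ((fun t => hfun g m' t / t ^ (q - 1)) '' Set.Ioc 0 (-s)))
  else 0

/-- `H(s) = ∫₀ˢ h(t) dt`. -/
noncomputable def Hfun (g : ℝ → ℝ) (m' : ℝ) (s : ℝ) : ℝ :=
  ∫ t in (0 : ℝ)..s, hfun g m' t

/-- `H̄(s) = ∫₀ˢ h̄(t) dt`. -/
noncomputable def Hbar (g : ℝ → ℝ) (m' q : ℝ) (s : ℝ) : ℝ :=
  ∫ t in (0 : ℝ)..s, hbar g m' q t

theorem stmt_13 (g : ℝ → ℝ) (hg : Continuous g) (hodd : ∀ s, g (-s) = -g s)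
    (m : ℝ) (hm : 0 < m)
    (hlim : Filter.limsup (fun s => g s / s) (nhdsWithin 0 {0}ᶜ) = -m)
    (m' q : ℝ) (hm' : m' ∈ Set.Ioo 0 m) (hq : 2 < q) :
    ∃ δ₀ > (0 : ℝ), ∀ s ∈ Set.Icc (-δ₀) δ₀,
      hfun g m' s = 0 ∧ hbar g m' q s = 0 ∧ Hfun g m' s = 0 ∧ Hbar g m' q s = 0 := by

  -- g(0) = 0
  have g0 : g 0 = 0 := by have := hodd 0; simp at this; linarith
  -- the set of eventual upper bounds is nonempty
  have hne : {a : ℝ | ∀ᶠ s in nhdsWithin 0 {0}ᶜ, g s / s ≤ a}.Nonempty := by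
    by_contra h
    rw [Set.not_nonempty_iff_eq_empty] at h
    rw [Filter.limsup_eq, h, Real.sInf_empty] at hlim
    linarith
  have hbdd : Filter.IsBoundedUnder (· ≤ ·) (nhdsWithin 0 {0}ᶜ) (fun s => g s / s) := by
    obtain ⟨b, hb⟩ := hne
    exact ⟨b, hb⟩
  have hev : ∀ᶠ s in nhdsWithin 0 {0}ᶜ, g s / s < -m' := by
    refine Filter.eventually_lt_of_limsup_lt ?_ hbdd
    rw [hlim]; have := hm'.2; linarith
  obtain ⟨ε, hε, hsub⟩ := Metric.mem_nhdsWithin_iff.mp hev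
  refine ⟨ε / 2, by linarith, ?_⟩
  set δ := ε / 2 with hδdef
  have hδ : 0 < δ := by positivity
  -- key: hfun vanishes on (0, δ]
  have h0 : ∀ s : ℝ, 0 < s → s ≤ δ → hfun g m' s = 0 := by
    intro s hs hsδ
    have hmem : s ∈ Metric.ball (0:ℝ) ε ∩ {0}ᶜ := by
      constructor
      · simp only [Metric.mem_ball, Real.dist_eq, sub_zero]
        rw [abs_of_pos hs]; simp only [hδdef] at hsδ; linarith
      · simp only [Set.mem_compl_iff, Set.mem_singleton_iff]; linarith
    have hlt : g s / s < -m' := hsub hmem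
    have hgs : g s < -m' * s := by
      have := (div_lt_iff₀ hs).mp hlt
      linarith
    have hle : m' * s + g s ≤ 0 := by linarith
    simp only [hfun, if_pos hs.le]
    exact max_eq_right hle
  -- hfun vanishes on [-δ, δ]
  have hall : ∀ s ∈ Set.Icc (-δ) δ, hfun g m' s = 0 := by
    intro s hs
    rcases lt_trichotomy s 0 with hneg | hzero | hpos
    · have hpos' : 0 < -s := by linarith
      have hle' : -s ≤ δ := by have := hs.1; linarith
      have := h0 (-s) hpos' hle'
      simp only [hfun, if_pos hpos'.le] at this
      simp only [hfun, if_neg (not_le.mpr hneg), this, neg_zero]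
    · simp [hfun, hzero, g0]
    · exact h0 s hpos (hs.2)
  -- the sSup vanishes
  have hsup : ∀ s : ℝ, 0 < s → s ≤ δ →
      sSup ((fun t => hfun g m' t / t ^ (q - 1)) '' Set.Ioc 0 s) = 0 := by
    intro s hs hsδ
    have himg : (fun t => hfun g m' t / t ^ (q - 1)) '' Set.Ioc 0 s = {0} := by
      have heq : Set.EqOn (fun t => hfun g m' t / t ^ (q - 1)) (fun _ => (0:ℝ))
          (Set.Ioc 0 s) := by
        intro t ht
        simp only
        rw [h0 t ht.1 (ht.2.trans hsδ), zero_div]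
      rw [Set.image_congr heq]
      exact (Set.nonempty_Ioc.mpr hs).image_const 0
    rw [himg, csSup_singleton]
  -- hbar vanishes on [-δ, δ]
  have hballbar : ∀ s ∈ Set.Icc (-δ) δ, hbar g m' q s = 0 := by
    intro s hs
    rcases lt_trichotomy s 0 with hneg | hzero | hpos
    · have hpos' : 0 < -s := by linarith
      have hle' : -s ≤ δ := by have := hs.1; linarith
      simp only [hbar, if_neg (not_lt.mpr hneg.le), if_pos hneg, hsup (-s) hpos' hle',
        mul_zero, neg_zero]
    · simp [hbar, hzero]
    · simp only [hbar, if_pos hpos, hsup s hpos (hs.2), mul_zero]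
  intro s hs
  have huIcc : Set.uIcc (0:ℝ) s ⊆ Set.Icc (-δ) δ :=
    Set.uIcc_subset_Icc ⟨by linarith, hδ.le⟩ hs
  refine ⟨hall s hs, hballbar s hs, ?_, ?_⟩
  · have : Hfun g m' s = ∫ t in (0:ℝ)..s, (0:ℝ) :=
      intervalIntegral.integral_congr fun t ht => hall t (huIcc ht)
    simpa using this
  · have : Hbar g m' q s = ∫ t in (0:ℝ)..s, (0:ℝ) :=
      intervalIntegral.integral_congr fun t ht => hballbar t (huIcc ht)
    simpa using this
end

section
/- Let g : ℝ → ℝ be continuous and odd, let m > 0 satisfy limsup_{s→0} g(s)/s = −m, and fix m' ∈ (0, m) and q > 2. Then the function s ↦ h̄(s)/s^{q−1} is non-decreasing on (0, +∞), and h̄(s)·s ≥ q·H̄(s) ≥ 0 for all s ∈ ℝ. -/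
/-! Near `0` the hypothesis on `g` forces `m's + g(s) < 0`, so `h` vanishes on some `(0, δ)`; with
continuity this makes `h(t)/t^{q-1}` bounded on every `(0, s]`. Hence `h̄(s)/s^{q-1}` is a running
supremum, so it is non-decreasing, and `h̄` is odd and non-decreasing on `[0, ∞)`. Comparing
`h̄(t) ≤ (t/s)^{q-1} h̄(s)` on `(0, s]` and integrating gives `q H̄(s) ≤ h̄(s) s` for `s > 0`;
the case `s < 0` follows because `h̄` is odd and `H̄` even. -/

open MeasureTheory Real Filter

open Set Topology

lemma Filter.isBoundedUnder_le_of_limsup_ne_zero {α : Type*} {f : Filter α} {u : α → ℝ}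
    (h : limsup u f ≠ 0) : f.IsBoundedUnder (· ≤ ·) u := by
  by_contra hu
  have hempty : {a | ∀ᶠ n in f, u n ≤ a} = ∅ := eq_empty_iff_forall_notMem.2 fun a ha => hu ⟨a, ha⟩
  exact h (by rw [limsup_eq, hempty, Real.sInf_empty])

lemma bddAbove_image_Ioc_of_eventually_nonpos {f : ℝ → ℝ} {a : ℝ} (hf : ContinuousOn f (Ioi a))
    (h : ∀ᶠ t in 𝓝[>] a, f t ≤ 0) (s : ℝ) : BddAbove (f '' Ioc a s) := by
  obtain ⟨b, hab, hb⟩ := (nhdsGT_basis a).eventually_iff.1 h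
  obtain ⟨c, hac, hcb⟩ := exists_between hab
  have hcover : Ioc a s ⊆ Ioo a b ∪ Icc c s := fun t ht => by
    rcases lt_or_ge t c with htc | htc
    · exact Or.inl ⟨ht.1, by linarith⟩
    · exact Or.inr ⟨htc, ht.2⟩
  have hsmall : BddAbove (f '' Ioo a b) := ⟨0, forall_mem_image.2 fun t ht => hb ht⟩
  have hlarge : BddAbove (f '' Icc c s) :=
    isCompact_Icc.bddAbove_image (hf.mono fun t ht => by simp only [mem_Ioi]; linarith [ht.1])
  exact ((image_union f _ _ ▸ hsmall.union hlarge)).mono (image_mono hcover)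

lemma monotone_sSup_image_Ioc {f : ℝ → ℝ} {a : ℝ} (hf₀ : ∀ t ∈ Ioi a, 0 ≤ f t)
    (hbdd : ∀ s, BddAbove (f '' Ioc a s)) : Monotone fun s => sSup (f '' Ioc a s) := by
  intro s₁ s₂ hs
  refine Real.sSup_le (forall_mem_image.2 fun t ht => ?_) ?_
  · exact le_csSup (hbdd s₂) (mem_image_of_mem f ⟨ht.1, ht.2.trans hs⟩)
  · exact Real.sSup_nonneg (forall_mem_image.2 fun t ht => hf₀ t ht.1)

/-- Integrating `φ t ≤ t ^ p * (φ s / s ^ p)` over `[0, s]`. -/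
lemma mul_integral_le_of_div_rpow_le {φ : ℝ → ℝ} {p s : ℝ} (hp : -1 < p) (hs : 0 < s)
    (hφ : IntervalIntegrable φ volume 0 s) (hle : ∀ t ∈ Ioo 0 s, φ t / t ^ p ≤ φ s / s ^ p) :
    (p + 1) * ∫ t in (0 : ℝ)..s, φ t ≤ φ s * s := by
  have hpow : IntervalIntegrable (fun t : ℝ => t ^ p * (φ s / s ^ p)) volume 0 s :=
    (intervalIntegral.intervalIntegrable_rpow' hp).mul_const _
  have hbound : ∫ t in (0 : ℝ)..s, φ t ≤ ∫ t in (0 : ℝ)..s, t ^ p * (φ s / s ^ p) :=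
    intervalIntegral.integral_mono_on_of_le_Ioo hs.le hφ hpow fun t ht =>
      (div_le_iff₀' (rpow_pos_of_pos ht.1 p)).1 (hle t ht)
  have hs_pow : s ^ (p + 1) = s ^ p * s := by rw [rpow_add hs, rpow_one]
  have hp1 : 0 < p + 1 := by linarith
  calc (p + 1) * ∫ t in (0 : ℝ)..s, φ t
      ≤ (p + 1) * ∫ t in (0 : ℝ)..s, t ^ p * (φ s / s ^ p) := by gcongr
    _ = φ s * s := by
      rw [intervalIntegral.integral_mul_const, integral_rpow (Or.inl hp),
        zero_rpow hp1.ne', hs_pow]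
      field_simp
      ring

lemma intervalIntegral.integral_zero_neg_of_odd {φ : ℝ → ℝ} (hφ : ∀ x, φ (-x) = -φ x) (s : ℝ) :
    ∫ x in (0 : ℝ)..-s, φ x = ∫ x in (0 : ℝ)..s, φ x := by
  calc ∫ x in (0 : ℝ)..-s, φ x
      = -∫ x in (0 : ℝ)..-s, φ (-x) := by simp only [hφ, intervalIntegral.integral_neg, neg_neg]
    _ = ∫ x in (0 : ℝ)..s, φ x := by
      rw [intervalIntegral.integral_comp_neg, neg_neg, neg_zero, intervalIntegral.integral_symm,
        neg_neg]

section

variable {g : ℝ → ℝ} {m' q : ℝ}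

lemma hfun_of_nonneg {t : ℝ} (ht : 0 ≤ t) : hfun g m' t = max (m' * t + g t) 0 := if_pos ht

lemma hfun_nonneg {t : ℝ} (ht : 0 ≤ t) : 0 ≤ hfun g m' t := by
  rw [hfun_of_nonneg ht]
  exact le_max_right _ _

lemma hfun_eventually_eq_zero (hm' : 0 ≤ m') (hlim : limsup (fun s => g s / s) (𝓝[≠] 0) < -m') :
    ∀ᶠ t in 𝓝[>] 0, hfun g m' t = 0 := by
  have hneg : limsup (fun s => g s / s) (𝓝[≠] 0) < 0 := by linarith
  have hlt := eventually_lt_of_limsup_lt hlim (isBoundedUnder_le_of_limsup_ne_zero hneg.ne)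
  replace hlt := hlt.filter_mono (nhdsWithin_mono _ fun t (ht : 0 < t) => ht.ne')
  filter_upwards [hlt, self_mem_nhdsWithin] with t hgt (ht : 0 < t)
  rw [hfun_of_nonneg ht.le, max_eq_right]
  nlinarith [(div_lt_iff₀ ht).1 hgt]

lemma continuousOn_hfun_div_rpow (hg : Continuous g) :
    ContinuousOn (fun t => hfun g m' t / t ^ (q - 1)) (Ioi 0) := by
  have hh : ContinuousOn (hfun g m') (Ioi 0) :=
    ((continuous_const.mul continuous_id).add hg).max continuous_const |>.continuousOn.congr
      fun t ht => hfun_of_nonneg (le_of_lt ht)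
  exact hh.div (continuousOn_id.rpow_const fun t ht => Or.inl (ne_of_gt ht))
    fun t ht => (rpow_pos_of_pos ht _).ne'

lemma hbar_eq_of_nonneg {s : ℝ} (hs : 0 ≤ s) :
    hbar g m' q s = s ^ (q - 1) * sSup ((fun t => hfun g m' t / t ^ (q - 1)) '' Ioc 0 s) := by
  rcases hs.eq_or_lt with rfl | hs
  · simp [hbar]
  · exact if_pos hs

lemma hbar_neg (s : ℝ) : hbar g m' q (-s) = -hbar g m' q s := by
  rcases lt_trichotomy s 0 with hs | rfl | hs
  · simp [hbar, hs, hs.not_gt]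
  · simp [hbar]
  · simp [hbar, hs, hs.not_gt]

lemma hfun_div_rpow_nonneg {t : ℝ} (ht : 0 ≤ t) : 0 ≤ hfun g m' t / t ^ (q - 1) :=
  div_nonneg (hfun_nonneg ht) (rpow_nonneg ht _)

lemma sSup_hfun_div_rpow_nonneg (s : ℝ) :
    0 ≤ sSup ((fun t => hfun g m' t / t ^ (q - 1)) '' Ioc 0 s) :=
  Real.sSup_nonneg (forall_mem_image.2 fun _ ht => hfun_div_rpow_nonneg ht.1.le)

lemma hbar_nonneg {s : ℝ} (hs : 0 ≤ s) : 0 ≤ hbar g m' q s := by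
  rw [hbar_eq_of_nonneg hs]
  exact mul_nonneg (rpow_nonneg hs _) (sSup_hfun_div_rpow_nonneg s)

lemma Hbar_neg (s : ℝ) : Hbar g m' q (-s) = Hbar g m' q s :=
  intervalIntegral.integral_zero_neg_of_odd hbar_neg s

lemma Hbar_nonneg (s : ℝ) : 0 ≤ Hbar g m' q s := by
  wlog hs : 0 ≤ s generalizing s
  · rw [← Hbar_neg]
    exact this (-s) (by linarith)
  exact intervalIntegral.integral_nonneg hs fun _ ht => hbar_nonneg ht.1

lemma monotone_sSup_hfun_div_rpow
    (hbdd : ∀ s, BddAbove ((fun t => hfun g m' t / t ^ (q - 1)) '' Ioc 0 s)) :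
    Monotone fun s => sSup ((fun t => hfun g m' t / t ^ (q - 1)) '' Ioc 0 s) :=
  monotone_sSup_image_Ioc (fun _ ht => hfun_div_rpow_nonneg (le_of_lt ht)) hbdd

lemma monotoneOn_hbar_div_rpow
    (hbdd : ∀ s, BddAbove ((fun t => hfun g m' t / t ^ (q - 1)) '' Ioc 0 s)) :
    MonotoneOn (fun s => hbar g m' q s / s ^ (q - 1)) (Ioi 0) := by
  intro s₁ hs₁ s₂ hs₂ hs
  simp only [hbar_eq_of_nonneg (le_of_lt hs₁), hbar_eq_of_nonneg (le_of_lt hs₂),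
    mul_div_cancel_left₀ _ (rpow_pos_of_pos hs₁ _).ne',
    mul_div_cancel_left₀ _ (rpow_pos_of_pos hs₂ _).ne']
  exact monotone_sSup_hfun_div_rpow hbdd hs

lemma monotoneOn_hbar (hq : 1 ≤ q)
    (hbdd : ∀ s, BddAbove ((fun t => hfun g m' t / t ^ (q - 1)) '' Ioc 0 s)) :
    MonotoneOn (hbar g m' q) (Ici 0) := by
  have hmul := (monotoneOn_rpow_Ici_of_exponent_nonneg (by linarith : 0 ≤ q - 1)).mul
    ((monotone_sSup_hfun_div_rpow hbdd).monotoneOn _) (fun s hs => rpow_nonneg hs _)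
    fun s _ => sSup_hfun_div_rpow_nonneg s
  exact hmul.congr fun s hs => (hbar_eq_of_nonneg hs).symm

lemma mul_Hbar_le (hq : 1 ≤ q)
    (hbdd : ∀ s, BddAbove ((fun t => hfun g m' t / t ^ (q - 1)) '' Ioc 0 s)) (s : ℝ) :
    q * Hbar g m' q s ≤ hbar g m' q s * s := by
  wlog hs : 0 ≤ s generalizing s
  · have := this (-s) (by linarith)
    rwa [Hbar_neg, hbar_neg, neg_mul_neg] at this
  rcases hs.eq_or_lt with rfl | hs
  · simp [Hbar]
  have hint : IntervalIntegrable (hbar g m' q) volume 0 s :=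
    ((monotoneOn_hbar hq hbdd).mono fun t ht => (uIcc_of_le hs.le ▸ ht).1).intervalIntegrable
  have key := mul_integral_le_of_div_rpow_le (by linarith : -1 < q - 1) hs hint fun t ht =>
    monotoneOn_hbar_div_rpow hbdd ht.1 hs ht.2.le
  rwa [sub_add_cancel] at key

end

theorem stmt_15_general (g : ℝ → ℝ) (hg : Continuous g)
    (m : ℝ)
    (hlim : Filter.limsup (fun s => g s / s) (nhdsWithin 0 {0}ᶜ) = -m)
    (m' q : ℝ) (hm' : m' ∈ Set.Ioo 0 m) (hq : 2 < q) :
    (∀ s₁ s₂ : ℝ, 0 < s₁ → s₁ ≤ s₂ →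
        hbar g m' q s₁ / s₁ ^ (q - 1) ≤ hbar g m' q s₂ / s₂ ^ (q - 1)) ∧
      ∀ s : ℝ, q * Hbar g m' q s ≤ hbar g m' q s * s ∧ 0 ≤ q * Hbar g m' q s := by
  have hvanish : ∀ᶠ t in 𝓝[>] 0, hfun g m' t = 0 :=
    hfun_eventually_eq_zero hm'.1.le (by linarith [hm'.2])
  have hbdd : ∀ s, BddAbove ((fun t => hfun g m' t / t ^ (q - 1)) '' Ioc 0 s) :=
    bddAbove_image_Ioc_of_eventually_nonpos (continuousOn_hfun_div_rpow hg)
      (hvanish.mono fun t ht => by simp [ht])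
  refine ⟨fun s₁ s₂ hs₁ hs => monotoneOn_hbar_div_rpow hbdd hs₁ (hs₁.trans_le hs) hs,
    fun s => ⟨mul_Hbar_le (by linarith) hbdd s, mul_nonneg (by linarith) (Hbar_nonneg s)⟩⟩

theorem stmt_15 (g : ℝ → ℝ) (hg : Continuous g) (hodd : ∀ s, g (-s) = -g s)
    (m : ℝ) (hm : 0 < m)
    (hlim : Filter.limsup (fun s => g s / s) (nhdsWithin 0 {0}ᶜ) = -m)
    (m' q : ℝ) (hm' : m' ∈ Set.Ioo 0 m) (hq : 2 < q) :
    (∀ s₁ s₂ : ℝ, 0 < s₁ → s₁ ≤ s₂ →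
        hbar g m' q s₁ / s₁ ^ (q - 1) ≤ hbar g m' q s₂ / s₂ ^ (q - 1)) ∧
      ∀ s : ℝ, q * Hbar g m' q s ≤ hbar g m' q s * s ∧ 0 ≤ q * Hbar g m' q s :=
  stmt_15_general g hg m hlim m' q hm' hq
end
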